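/- Assume φ satisfies (A.2) and (A.3), the gain matrix V is irreducible, and p̄ ∈ P is the max-min SIR-balanced power vector. Let n₀ ∈ N₀(p̄), and let y and x be strictly positive left and right eigenvectors of B^(n₀) associated with ρ(B^(n₀)), i.e., yᵀB^(n₀) = ρ(B^(n₀)) yᵀ and B^(n₀)x = ρ(B^(n₀)) x. If w = c·(y ∘ x) for some c > 0 (entrywise product), then p̄ maximizes the aggregate utility: Σ_{k=1}^K w_k φ(SIR_k(p)/γ_k) ≤ Σ_{k=1}^K w_k φ(SIR_k(p̄)/γ_k) for every p ∈ P₊. -/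

import Mathlib

open Matrix

/-- A nonnegative square matrix is irreducible. -/
def MatIrred {m : Type*} [Fintype m] (M : Matrix m m ℝ) : Prop :=
  ∀ S : Set m, S.Nonempty → S ≠ Set.univ → ∃ i ∈ S, ∃ j ∉ S, 0 < M i j

/-- Spectral radius of a real square matrix (largest modulus of a complex eigenvalue). -/
noncomputable def specRad {m : Type*} [Fintype m] [DecidableEq m] (M : Matrix m m ℝ) : ℝ :=
  sSup ((fun z : ℂ => ‖z‖) '' spectrum ℂ (M.map fun x => (x : ℂ)))

/-- SIR of link `k` under power vector `p`. -/
noncomputable def SIR {K : ℕ} (V : Matrix (Fin K) (Fin K) ℝ) (z : Fin K → ℝ)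
    (p : Fin K → ℝ) (k : Fin K) : ℝ :=
  p k / (V.mulVec p k + z k)

/-- The polytope of admissible power vectors. -/
def Pset {K N : ℕ} (C : Matrix (Fin N) (Fin K) ℝ) (phat : Fin N → ℝ) :
    Set (Fin K → ℝ) :=
  {p | (∀ k, 0 ≤ p k) ∧ ∀ n, C.mulVec p n ≤ phat n}

/-- Admissible power vectors with all entries positive. -/
def Pplus {K N : ℕ} (C : Matrix (Fin N) (Fin K) ℝ) (phat : Fin N → ℝ) :
    Set (Fin K → ℝ) :=
  {p ∈ Pset C phat | ∀ k, 0 < p k}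

/-- Normalized power-constraint functions `gₙ(p) = cₙᵀ p / Pₙ`. -/
noncomputable def gcon {K N : ℕ} (C : Matrix (Fin N) (Fin K) ℝ) (phat : Fin N → ℝ)
    (n : Fin N) (p : Fin K → ℝ) : ℝ :=
  C.mulVec p n / phat n

/-- The matrices `B⁽ⁿ⁾ = Γ (V + (1/Pₙ) z cₙᵀ)`. -/
noncomputable def Bmat {K N : ℕ} (V : Matrix (Fin K) (Fin K) ℝ) (z : Fin K → ℝ)
    (γ : Fin K → ℝ) (C : Matrix (Fin N) (Fin K) ℝ) (phat : Fin N → ℝ) (n : Fin N) :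
    Matrix (Fin K) (Fin K) ℝ :=
  Matrix.diagonal γ * (V + (phat n)⁻¹ • Matrix.vecMulVec z (C n))

/-- The extended `(K+1)×(K+1)` matrices `A⁽ⁿ⁾`. -/
noncomputable def Amat {K N : ℕ} (V : Matrix (Fin K) (Fin K) ℝ) (z : Fin K → ℝ)
    (γ : Fin K → ℝ) (C : Matrix (Fin N) (Fin K) ℝ) (phat : Fin N → ℝ) (n : Fin N) :
    Matrix (Fin (K+1)) (Fin (K+1)) ℝ :=
  Matrix.of fun i j =>
    if hi : (i : ℕ) < K then
      if hj : (j : ℕ) < K then γ ⟨i, hi⟩ * V ⟨i, hi⟩ ⟨j, hj⟩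
      else γ ⟨i, hi⟩ * z ⟨i, hi⟩
    else
      if hj : (j : ℕ) < K then (phat n)⁻¹ * ∑ k, C n k * (γ k * V k ⟨j, hj⟩)
      else (phat n)⁻¹ * ∑ k, C n k * (γ k * z k)

/-- `pbar` is a max-min SIR-balanced power vector: it maximizes
`p ↦ min_k SIR_k(p)/γ_k` over the set `P`. -/
def MaxMinBalanced {K N : ℕ} (V : Matrix (Fin K) (Fin K) ℝ) (z : Fin K → ℝ)
    (γ : Fin K → ℝ) (C : Matrix (Fin N) (Fin K) ℝ) (phat : Fin N → ℝ)
    (pbar : Fin K → ℝ) : Prop :=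
  pbar ∈ Pset C phat ∧
    ∀ p ∈ Pset C phat, (⨅ k, SIR V z p k / γ k) ≤ ⨅ k, SIR V z pbar k / γ k

/-- The set `N₀(p)` of active power constraints. -/
def activeSet {K N : ℕ} (C : Matrix (Fin N) (Fin K) ℝ) (phat : Fin N → ℝ)
    (p : Fin K → ℝ) : Set (Fin N) :=
  {n | gcon C phat n p = 1 ∧ ∀ m, gcon C phat m p ≤ gcon C phat n p}

/-- The (relatively open) probability simplex `Π⁺_K`. -/
def PosSimplex (K : ℕ) : Set (Fin K → ℝ) :=
  {w | (∀ k, 0 < w k) ∧ ∑ k, w k = 1}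

/-- The feasible QoS region `F`. -/
def QoSRegion {K N : ℕ} (V : Matrix (Fin K) (Fin K) ℝ) (z : Fin K → ℝ)
    (γ : Fin K → ℝ) (C : Matrix (Fin N) (Fin K) ℝ) (phat : Fin N → ℝ)
    (φ : ℝ → ℝ) : Set (Fin K → ℝ) :=
  {q | ∃ p ∈ Pplus C phat, ∀ k, q k = φ (SIR V z p k / γ k)}

/-!
Because `V` is irreducible, the max-min optimum `pbar` equalizes all normalized SIRs at the
optimal value `t`: otherwise, lowering the powers of the links above `t` by a factor close to `1`
lifts some link at level `t` that they interfere with, and repeating this lifts every link above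
`t`. At an active constraint `n₀` this says `B⁽ⁿ⁰⁾ pbar = t⁻¹ pbar`, so `ρ(B⁽ⁿ⁰⁾) = t⁻¹`.
For `p ∈ P₊` the constraint `g_{n₀}(p) ≤ 1` gives `SIR_k(p)/γ_k ≤ p_k/(B⁽ⁿ⁰⁾p)_k`, and the
Friedland–Karlin inequality bounds the `y ∘ x`-weighted mean of `log (p_k/(B⁽ⁿ⁰⁾p)_k)` by
`log ρ⁻¹ = log t`. Jensen's inequality for the convex function `log ∘ g` turns this bound on
the weighted geometric mean of the SIRs into `∑ w_k φ(SIR_k(p)/γ_k) ≤ (∑ w_k) φ(t)`, the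
utility of `pbar`.
-/

open Real Set

section Perron

variable {ι : Type*} [Fintype ι]

lemma mulVec_pos_of_mulVec_pos {B : Matrix ι ι ℝ} (hB : ∀ i j, 0 ≤ B i j) {x p : ι → ℝ}
    (hx : ∀ j, 0 ≤ x j) (hp : ∀ j, 0 < p j) {k : ι} (hBx : 0 < (B *ᵥ x) k) :
    0 < (B *ᵥ p) k := by
  obtain ⟨j, -, hj⟩ := Finset.exists_lt_of_sum_lt (s := Finset.univ) (f := 0)
    (g := fun j => B k j * x j) (by simpa [mulVec, dotProduct] using hBx)
  have hBkj : 0 < B k j := pos_of_mul_pos_left hj (hx j)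
  exact Finset.sum_pos' (fun l _ => mul_nonneg (hB k l) (hp l).le)
    ⟨j, Finset.mem_univ j, mul_pos hBkj (hp j)⟩

lemma sum_mul_log_le_mul_log_div_sum {b r : ι → ℝ} (hb : ∀ i, 0 ≤ b i)
    (hb' : 0 < ∑ i, b i) (hr : ∀ i, 0 < r i) :
    ∑ i, b i * log (r i) ≤ (∑ i, b i) * log ((∑ i, b i * r i) / ∑ i, b i) := by
  have h := strictConcaveOn_log_Ioi.concaveOn.le_map_centerMass (t := Finset.univ) (w := b)
    (p := r) (fun i _ => hb i) hb' (fun i _ => hr i)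
  simp only [Finset.centerMass, smul_eq_mul, Function.comp_apply] at h
  rw [inv_mul_eq_div, inv_mul_eq_div, div_le_iff₀' hb'] at h
  exact h

/-- The Friedland–Karlin inequality. -/
lemma sum_mul_log_div_mulVec_le {B : Matrix ι ι ℝ} (hB : ∀ i j, 0 ≤ B i j) {ρ : ℝ} (hρ : 0 < ρ)
    {y x p : ι → ℝ} (hy : ∀ k, 0 < y k) (hx : ∀ k, 0 < x k) (hp : ∀ k, 0 < p k)
    (hyB : y ᵥ* B = ρ • y) (hBx : B *ᵥ x = ρ • x) :
    ∑ k, y k * x k * log (p k / (B *ᵥ p) k) ≤ (∑ k, y k * x k) * log ρ⁻¹ := by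
  have hρx : ∀ k, 0 < ρ * x k := fun k => mul_pos hρ (hx k)
  have hBp : ∀ k, 0 < (B *ᵥ p) k := fun k =>
    mulVec_pos_of_mulVec_pos hB (fun j => (hx j).le) hp (by simpa [hBx] using hρx k)
  set f : ι → ℝ := fun k => log (p k / x k)
  -- Jensen in row `k`, with weights `B k j * x j` summing to `ρ * x k`
  have hrow : ∀ k, (B *ᵥ (x * f)) k ≤ ρ * x k * log ((B *ᵥ p) k / (ρ * x k)) := by
    intro k
    have hsum : ∑ j, B k j * x j = ρ * x k := by simpa [mulVec, dotProduct] using congrFun hBx k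
    have h := sum_mul_log_le_mul_log_div_sum (b := fun j => B k j * x j) (r := fun j => p j / x j)
      (fun j => mul_nonneg (hB k j) (hx j).le) (hsum ▸ hρx k) (fun j => div_pos (hp j) (hx j))
    have hBpk : ∑ j, B k j * x j * (p j / x j) = (B *ᵥ p) k := by
      simp only [mulVec, dotProduct]
      exact Finset.sum_congr rfl fun j _ => by field_simp [(hx j).ne']
    rw [hsum, hBpk] at h
    simpa [mulVec, dotProduct, f, mul_assoc] using h
  have hcollapse : y ⬝ᵥ (B *ᵥ (x * f)) = ρ * ∑ k, y k * x k * f k := by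
    rw [dotProduct_mulVec, hyB, smul_dotProduct, smul_eq_mul]
    simp [dotProduct, mul_assoc]
  have hmain : ρ * ∑ k, y k * x k * f k ≤ ρ * ∑ k, y k * x k * log ((B *ᵥ p) k / (ρ * x k)) := by
    rw [← hcollapse, Finset.mul_sum]
    exact Finset.sum_le_sum fun k _ => by
      have := mul_le_mul_of_nonneg_left (hrow k) (hy k).le
      linarith
  have hsplit : ∀ k, log (p k / (B *ᵥ p) k) =
      f k - log ((B *ᵥ p) k / (ρ * x k)) + log ρ⁻¹ := by
    intro k
    rw [← log_div (div_pos (hp k) (hx k)).ne' (div_pos (hBp k) (hρx k)).ne',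
      ← log_mul (div_pos (div_pos (hp k) (hx k)) (div_pos (hBp k) (hρx k))).ne'
        (inv_pos.2 hρ).ne']
    congr 1
    field_simp [(hx k).ne', (hBp k).ne', hρ.ne']
  simp only [hsplit, mul_add, mul_sub, Finset.sum_add_distrib, Finset.sum_sub_distrib,
    ← Finset.sum_mul]
  linarith [le_of_mul_le_mul_left hmain hρ]

lemma eq_of_vecMul_eq_smul_of_mulVec_eq_smul [Nonempty ι] {B : Matrix ι ι ℝ} {ρ μ : ℝ}
    {y q : ι → ℝ} (hy : ∀ k, 0 < y k) (hq : ∀ k, 0 < q k) (hyB : y ᵥ* B = ρ • y)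
    (hBq : B *ᵥ q = μ • q) : ρ = μ := by
  have hyq : 0 < y ⬝ᵥ q :=
    Finset.sum_pos (fun k _ => mul_pos (hy k) (hq k)) Finset.univ_nonempty
  have h := dotProduct_mulVec y B q
  rw [hyB, hBq, dotProduct_smul, smul_dotProduct, smul_eq_mul, smul_eq_mul] at h
  exact (mul_right_cancel₀ hyq.ne' h).symm

end Perron

lemma sum_mul_le_sum_mul_of_sum_mul_log_le {ι : Type*} [Fintype ι] {φ g : ℝ → ℝ}
    (hφ : StrictMonoOn φ (Ioi 0)) (hgφ : ∀ x ∈ Ioi (0:ℝ), g (φ x) = x)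
    (hg : ConvexOn ℝ (φ '' Ioi 0) fun q => log (g q)) {w r : ι → ℝ} {t : ℝ}
    (hw : ∀ i, 0 ≤ w i) (hw' : 0 < ∑ i, w i) (hr : ∀ i, 0 < r i) (ht : 0 < t)
    (hlog : ∑ i, w i * log (r i) ≤ (∑ i, w i) * log t) :
    ∑ i, w i * φ (r i) ≤ (∑ i, w i) * φ t := by
  have hmem : ∀ i ∈ Finset.univ, φ (r i) ∈ φ '' Ioi 0 := fun i _ => mem_image_of_mem φ (hr i)
  obtain ⟨b, hb, hφb⟩ := hg.1.centerMass_mem (fun i _ => hw i) hw' hmem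
  have hjensen := hg.map_centerMass_le (fun i _ => hw i) hw' hmem
  rw [← hφb, hgφ b hb] at hjensen
  simp only [Finset.centerMass, Function.comp_apply, hgφ _ (hr _), smul_eq_mul, inv_mul_eq_div,
    le_div_iff₀' hw'] at hjensen
  have hbt : b ≤ t := (log_le_log_iff hb ht).1 (le_of_mul_le_mul_left (hjensen.trans hlog) hw')
  have hφbt := hφ.monotoneOn hb ht hbt
  rw [hφb, Finset.centerMass] at hφbt
  simpa [inv_mul_eq_div, div_le_iff₀' hw'] using hφbt

section PowerControl

variable {K N : ℕ} {V : Matrix (Fin K) (Fin K) ℝ} {z γ : Fin K → ℝ}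
  {C : Matrix (Fin N) (Fin K) ℝ} {phat : Fin N → ℝ}
  {pbar : Fin K → ℝ}

lemma Bmat_mulVec (n : Fin N) (p : Fin K → ℝ) (k : Fin K) :
    (Bmat V z γ C phat n *ᵥ p) k = γ k * ((V *ᵥ p) k + z k * gcon C phat n p) := by
  rw [Bmat, ← mulVec_mulVec, mulVec_diagonal, add_mulVec, smul_mulVec, vecMulVec_mulVec]
  simp only [Pi.add_apply, Pi.smul_apply, smul_eq_mul, MulOpposite.smul_eq_mul_unop,
    MulOpposite.unop_op, gcon]
  unfold mulVec
  ring

lemma Bmat_nonneg (hV : ∀ i j, 0 ≤ V i j) (hz : ∀ k, 0 ≤ z k) (hγ : ∀ k, 0 ≤ γ k)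
    (hC : ∀ n k, 0 ≤ C n k) (hphat : ∀ n, 0 ≤ phat n) (n : Fin N) (i j : Fin K) :
    0 ≤ Bmat V z γ C phat n i j := by
  simp only [Bmat, diagonal_mul, Matrix.add_apply, Matrix.smul_apply, vecMulVec_apply,
    smul_eq_mul]
  exact mul_nonneg (hγ i) (add_nonneg (hV i j)
    (mul_nonneg (inv_nonneg.2 (hphat n)) (mul_nonneg (hz i) (hC n j))))

lemma SIR_div_eq (p : Fin K → ℝ) (k : Fin K) :
    SIR V z p k / γ k = p k / (γ k * ((V *ᵥ p) k + z k)) := by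
  rw [SIR, div_div, mul_comm]

lemma Pplus_nonempty (hphat : ∀ n, 0 < phat n) : (Pplus C phat).Nonempty := by
  have hsmall : ∀ᶠ ε in nhdsWithin (0:ℝ) (Ioi 0), ∀ n, (C *ᵥ fun _ => ε) n < phat n := by
    refine Filter.eventually_all.2 fun n => ?_
    have hcont : Continuous fun ε : ℝ => (C *ᵥ fun _ => ε) n := by
      simp only [mulVec, dotProduct]; fun_prop
    refine (hcont.tendsto' 0 0 ?_).mono_left nhdsWithin_le_nhds |>.eventually_lt_const (hphat n)
    simp [mulVec, dotProduct]
  obtain ⟨ε, hε, hεpos⟩ := (hsmall.and self_mem_nhdsWithin).exists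
  exact ⟨fun _ => ε, ⟨fun _ => le_of_lt hεpos, fun n => (hε n).le⟩, fun _ => hεpos⟩

lemma mulVec_add_pos (hV : ∀ i j, 0 ≤ V i j) (hz : ∀ k, 0 < z k) {p : Fin K → ℝ}
    (hp : ∀ k, 0 ≤ p k) (k : Fin K) : 0 < (V *ᵥ p) k + z k :=
  add_pos_of_nonneg_of_pos (dotProduct_nonneg_of_nonneg (hV k) hp) (hz k)

lemma SIR_div_pos (hV : ∀ i j, 0 ≤ V i j) (hz : ∀ k, 0 < z k) (hγ : ∀ k, 0 < γ k)
    {p : Fin K → ℝ} (hp : p ∈ Pplus C phat) (k : Fin K) : 0 < SIR V z p k / γ k :=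
  div_pos (div_pos (hp.2 k) (mulVec_add_pos hV hz hp.1.1 k)) (hγ k)

lemma div_le_SIR_of_le (hV : ∀ i j, 0 ≤ V i j) (hz : ∀ k, 0 < z k) {p q : Fin K → ℝ}
    (hq : ∀ k, 0 ≤ q k) (hqp : q ≤ p) (k : Fin K) :
    q k / ((V *ᵥ p) k + z k) ≤ SIR V z q k :=
  div_le_div_of_nonneg_left (hq k) (mulVec_add_pos hV hz hq k)
    (by simpa [mulVec] using dotProduct_le_dotProduct_of_nonneg_left hqp (hV k))

lemma div_lt_SIR_of_lt (hV : ∀ i j, 0 ≤ V i j) (hz : ∀ k, 0 < z k) {p q : Fin K → ℝ}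
    (hq : ∀ k, 0 ≤ q k) (hqp : q ≤ p) {i j : Fin K} (hij : 0 < V i j) (hqpj : q j < p j)
    (hqi : 0 < q i) : q i / ((V *ᵥ p) i + z i) < SIR V z q i :=
  div_lt_div_of_pos_left hqi (mulVec_add_pos hV hz hq i) <| by
    simpa [mulVec, dotProduct] using Finset.sum_lt_sum
      (fun l _ => mul_le_mul_of_nonneg_left (hqp l) (hV i l))
      ⟨j, Finset.mem_univ j, mul_lt_mul_of_pos_left hqpj hij⟩

lemma exists_mem_Ioo_forall_lt_mul {ι : Type*} [Finite ι] {P : ι → Prop} {t : ℝ} {a : ι → ℝ}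
    (h : ∀ k, P k → t < a k) : ∃ θ ∈ Ioo (0:ℝ) 1, ∀ k, P k → t < θ * a k := by
  have hnear : ∀ᶠ θ in nhdsWithin (1:ℝ) (Iio 1), ∀ k, P k → t < θ * a k := by
    refine Filter.eventually_all.2 fun k => ?_
    by_cases hk : P k
    · have hlim : Filter.Tendsto (fun θ : ℝ => θ * a k) (nhdsWithin 1 (Iio 1)) (nhds (a k)) :=
        ((continuous_mul_const _).tendsto' 1 _ (one_mul _)).mono_left nhdsWithin_le_nhds
      exact (hlim.eventually_const_lt (h k hk)).mono fun _ h _ => h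
    · exact Filter.Eventually.of_forall fun _ h => (hk h).elim
  exact (Filter.Eventually.and (Ioo_mem_nhdsLT zero_lt_one) hnear).exists

/-- Scale the powers off `S` down by a factor `θ < 1` so close to `1` that the links off `S`
stay above `t`; the links in `S` only gain, and `i` strictly, from its interferer `j ∉ S`. -/
lemma exists_SIR_div_gt_off_erase (hV : ∀ i j, 0 ≤ V i j) (hz : ∀ k, 0 < z k)
    (hγ : ∀ k, 0 < γ k) (hC : ∀ n k, 0 ≤ C n k) {t : ℝ} {S : Finset (Fin K)} {i j : Fin K}
    (hj : j ∉ S) (hij : 0 < V i j) {p : Fin K → ℝ} (hp : p ∈ Pplus C phat)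
    (hge : ∀ k, t ≤ SIR V z p k / γ k) (hgt : ∀ k ∉ S, t < SIR V z p k / γ k) :
    ∃ q ∈ Pplus C phat,
      (∀ k, t ≤ SIR V z q k / γ k) ∧ ∀ k ∉ S.erase i, t < SIR V z q k / γ k := by
  obtain ⟨θ, ⟨hθ0, hθ1⟩, hθ⟩ := exists_mem_Ioo_forall_lt_mul hgt
  obtain ⟨⟨hp0, hpC⟩, hpos⟩ := hp
  set q := S.piecewise p (θ • p)
  have hqS : ∀ k ∈ S, q k = p k := fun k hk => S.piecewise_eq_of_mem _ _ hk
  have hqSc : ∀ k ∉ S, q k = θ * p k := fun k hk => S.piecewise_eq_of_notMem _ _ hk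
  have hqpos : ∀ k, 0 < q k := fun k => by
    by_cases hk : k ∈ S
    · rw [hqS k hk]; exact hpos k
    · rw [hqSc k hk]; exact mul_pos hθ0 (hpos k)
  have hqp : q ≤ p := fun k => by
    by_cases hk : k ∈ S
    · rw [hqS k hk]
    · rw [hqSc k hk]; exact mul_le_of_le_one_left (hpos k).le hθ1.le
  have hq0 : ∀ k, 0 ≤ q k := fun k => (hqpos k).le
  have hgain : ∀ k ∈ S, SIR V z p k / γ k ≤ SIR V z q k / γ k := fun k hk => by
    gcongr
    · exact (hγ k).le
    · simpa [SIR, hqS k hk] using div_le_SIR_of_le hV hz hq0 hqp k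
  have hloss : ∀ k ∉ S, θ * (SIR V z p k / γ k) ≤ SIR V z q k / γ k := fun k hk => by
    rw [← mul_div_assoc]
    gcongr
    · exact (hγ k).le
    · simpa [SIR, hqSc k hk, mul_div_assoc] using div_le_SIR_of_le hV hz hq0 hqp k
  have hoff : ∀ k ∉ S, t < SIR V z q k / γ k := fun k hk => (hθ k hk).trans_le (hloss k hk)
  refine ⟨q, ⟨⟨hq0, fun n => ?_⟩, hqpos⟩, fun k => ?_, fun k hk => ?_⟩
  · have hCqp : (C *ᵥ q) n ≤ (C *ᵥ p) n := by
      simpa [mulVec] using dotProduct_le_dotProduct_of_nonneg_left hqp (hC n)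
    exact hCqp.trans (hpC n)
  · by_cases hk : k ∈ S
    · exact (hge k).trans (hgain k hk)
    · exact (hoff k hk).le
  · by_cases hkS : k ∈ S
    · obtain rfl : k = i := by simpa [hkS] using hk
      have hqj : q j < p j := by
        rw [hqSc j hj]; exact mul_lt_of_lt_one_left (hpos j) hθ1
      refine (hge k).trans_lt (div_lt_div_of_pos_right ?_ (hγ k))
      simpa [SIR, hqS k hkS] using div_lt_SIR_of_lt hV hz hq0 hqp hij hqj (hqpos k)
    · exact hoff k hkS

lemma exists_SIR_div_gt_of_irreducible (hV : ∀ i j, 0 ≤ V i j) (hz : ∀ k, 0 < z k)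
    (hγ : ∀ k, 0 < γ k) (hC : ∀ n k, 0 ≤ C n k) (hirr : MatIrred V) {t : ℝ}
    (S : Finset (Fin K)) (hS : S ≠ Finset.univ) {p : Fin K → ℝ} (hp : p ∈ Pplus C phat)
    (hge : ∀ k, t ≤ SIR V z p k / γ k) (hgt : ∀ k ∉ S, t < SIR V z p k / γ k) :
    ∃ q ∈ Pplus C phat, ∀ k, t < SIR V z q k / γ k := by
  induction S using Finset.strongInduction generalizing p with
  | H S ih =>
    rcases S.eq_empty_or_nonempty with rfl | hSne
    · exact ⟨p, hp, fun k => hgt k (Finset.notMem_empty k)⟩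
    obtain ⟨i, hi, j, hj, hij⟩ :=
      hirr S (Finset.coe_nonempty.2 hSne) (by rwa [Ne, Finset.coe_eq_univ])
    obtain ⟨q, hq, hqge, hqgt⟩ := exists_SIR_div_gt_off_erase hV hz hγ hC hj hij hp hge hgt
    refine ih _ (Finset.erase_ssubset hi) (fun h => hj ?_) hq hqge hqgt
    exact Finset.mem_of_mem_erase (h ▸ Finset.mem_univ j)

lemma SIR_div_le_div_Bmat_mulVec (hz : ∀ k, 0 ≤ z k) (hγ : ∀ k, 0 ≤ γ k)
    (hphat : ∀ n, 0 < phat n) {p : Fin K → ℝ} (hp : p ∈ Pset C phat) (n : Fin N) {k : Fin K}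
    (hBp : 0 < (Bmat V z γ C phat n *ᵥ p) k) :
    SIR V z p k / γ k ≤ p k / (Bmat V z γ C phat n *ᵥ p) k := by
  rw [SIR_div_eq]
  refine div_le_div_of_nonneg_left (hp.1 k) hBp ?_
  rw [Bmat_mulVec]
  have hg : gcon C phat n p ≤ 1 := (div_le_one (hphat n)).2 (hp.2 n)
  gcongr
  · exact hγ k
  · exact mul_le_of_le_one_right (hz k) hg

namespace MaxMinBalanced

variable [Nonempty (Fin K)]

lemma iInf_pos (hV : ∀ i j, 0 ≤ V i j) (hz : ∀ k, 0 < z k) (hγ : ∀ k, 0 < γ k)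
    (hphat : ∀ n, 0 < phat n) (hbal : MaxMinBalanced V z γ C phat pbar) :
    0 < ⨅ k, SIR V z pbar k / γ k := by
  obtain ⟨p, hp⟩ := Pplus_nonempty (C := C) hphat
  obtain ⟨k, hk⟩ := exists_eq_ciInf_of_finite (f := fun k => SIR V z p k / γ k)
  exact (hk ▸ SIR_div_pos hV hz hγ hp k).trans_le (hbal.2 p hp.1)

lemma pos (hV : ∀ i j, 0 ≤ V i j) (hz : ∀ k, 0 < z k) (hγ : ∀ k, 0 < γ k)
    (hphat : ∀ n, 0 < phat n) (hbal : MaxMinBalanced V z γ C phat pbar) (k : Fin K) :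
    0 < pbar k := by
  refine (hbal.1.1 k).lt_of_ne fun h => ?_
  have := (hbal.iInf_pos hV hz hγ hphat).trans_le (ciInf_le (Finite.bddBelow_range _) k)
  simp [SIR, ← h] at this

lemma SIR_div_eq_iInf (hV : ∀ i j, 0 ≤ V i j) (hz : ∀ k, 0 < z k) (hγ : ∀ k, 0 < γ k)
    (hC : ∀ n k, 0 ≤ C n k) (hphat : ∀ n, 0 < phat n) (hirr : MatIrred V)
    (hbal : MaxMinBalanced V z γ C phat pbar) (k : Fin K) :
    SIR V z pbar k / γ k = ⨅ k, SIR V z pbar k / γ k := by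
  set t := ⨅ k, SIR V z pbar k / γ k
  have hge : ∀ k, t ≤ SIR V z pbar k / γ k := fun k => ciInf_le (Finite.bddBelow_range _) k
  by_contra hne
  set S := Finset.univ.filter fun k => SIR V z pbar k / γ k ≤ t
  have hS : S ≠ Finset.univ := fun h => by
    have hk : k ∈ S := h ▸ Finset.mem_univ k
    exact hne (le_antisymm (by simpa [S] using hk) (hge k))
  obtain ⟨q, hq, hqgt⟩ := exists_SIR_div_gt_of_irreducible hV hz hγ hC hirr S hS
    ⟨hbal.1, hbal.pos hV hz hγ hphat⟩ hge (fun k hk => by simpa [S] using hk)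
  obtain ⟨k', hk'⟩ := exists_eq_ciInf_of_finite (f := fun k => SIR V z q k / γ k)
  have := hbal.2 q hq.1
  rw [← hk'] at this
  exact (hqgt k').not_ge this

lemma Bmat_mulVec_eq (hV : ∀ i j, 0 ≤ V i j) (hz : ∀ k, 0 < z k) (hγ : ∀ k, 0 < γ k)
    (hC : ∀ n k, 0 ≤ C n k) (hphat : ∀ n, 0 < phat n) (hirr : MatIrred V)
    (hbal : MaxMinBalanced V z γ C phat pbar) {n : Fin N} (hn : n ∈ activeSet C phat pbar) :
    Bmat V z γ C phat n *ᵥ pbar = (⨅ k, SIR V z pbar k / γ k)⁻¹ • pbar := by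
  ext k
  have hpos := (hbal.pos hV hz hγ hphat k).ne'
  rw [Bmat_mulVec, hn.1, mul_one, Pi.smul_apply, smul_eq_mul,
    ← hbal.SIR_div_eq_iInf hV hz hγ hC hphat hirr k, SIR_div_eq, inv_div, div_mul_cancel₀ _ hpos]

lemma sum_mul_log_SIR_div_le (hV : ∀ i j, 0 ≤ V i j) (hz : ∀ k, 0 < z k) (hγ : ∀ k, 0 < γ k)
    (hC : ∀ n k, 0 ≤ C n k) (hphat : ∀ n, 0 < phat n) (hirr : MatIrred V)
    (hbal : MaxMinBalanced V z γ C phat pbar) {n : Fin N} (hn : n ∈ activeSet C phat pbar)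
    {y x : Fin K → ℝ} (hy : ∀ k, 0 < y k) (hx : ∀ k, 0 < x k)
    (hyB : y ᵥ* Bmat V z γ C phat n = specRad (Bmat V z γ C phat n) • y)
    (hBx : Bmat V z γ C phat n *ᵥ x = specRad (Bmat V z γ C phat n) • x)
    {p : Fin K → ℝ} (hp : p ∈ Pplus C phat) :
    ∑ k, y k * x k * log (SIR V z p k / γ k) ≤
      (∑ k, y k * x k) * log (⨅ k, SIR V z pbar k / γ k) := by
  set B := Bmat V z γ C phat n
  have ht := hbal.iInf_pos hV hz hγ hphat
  have hB : ∀ i j, 0 ≤ B i j :=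
    Bmat_nonneg hV (fun k => (hz k).le) (fun k => (hγ k).le) hC (fun n => (hphat n).le) n
  have hρ : specRad B = (⨅ k, SIR V z pbar k / γ k)⁻¹ := eq_of_vecMul_eq_smul_of_mulVec_eq_smul hy
    (hbal.pos hV hz hγ hphat) hyB (hbal.Bmat_mulVec_eq hV hz hγ hC hphat hirr hn)
  have hBp : ∀ k, 0 < (B *ᵥ p) k := fun k => mulVec_pos_of_mulVec_pos hB (fun j => (hx j).le)
    hp.2 (by simpa [hBx, hρ] using mul_pos (inv_pos.2 ht) (hx k))
  calc _ ≤ ∑ k, y k * x k * log (p k / (B *ᵥ p) k) := Finset.sum_le_sum fun k _ =>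
        mul_le_mul_of_nonneg_left (log_le_log (SIR_div_pos hV hz hγ hp k)
          (SIR_div_le_div_Bmat_mulVec (fun k => (hz k).le) (fun k => (hγ k).le) hphat hp.1 n
            (hBp k))) (mul_pos (hy k) (hx k)).le
    _ ≤ _ := by
        simpa [hρ] using sum_mul_log_div_mulVec_le hB (hρ ▸ inv_pos.2 ht) hy hx hp.2 hyB hBx

end MaxMinBalanced

end PowerControl

theorem stmt16_general    {K N : ℕ} (hK : 2 ≤ K)
    (V : Matrix (Fin K) (Fin K) ℝ) (z γ : Fin K → ℝ)
    (C : Matrix (Fin N) (Fin K) ℝ) (phat : Fin N → ℝ)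
    (hV : ∀ i j, 0 ≤ V i j)
    (hz : ∀ k, 0 < z k) (hγ : ∀ k, 0 < γ k)
    (hC : ∀ n k, C n k = 0 ∨ C n k = 1)
    (hphat : ∀ n, 0 < phat n)
    (hirr : MatIrred V)
    (φ g : ℝ → ℝ)
    (hφmono : StrictMonoOn φ (Set.Ioi 0))
    (hginv : ∀ x ∈ Set.Ioi (0:ℝ), g (φ x) = x)
    (hglog : ConvexOn ℝ (φ '' Set.Ioi 0) fun q => Real.log (g q))
    (pbar : Fin K → ℝ) (hbal : MaxMinBalanced V z γ C phat pbar)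
    (n₀ : Fin N) (hn₀ : n₀ ∈ activeSet C phat pbar)
    (y x : Fin K → ℝ) (hy : ∀ k, 0 < y k) (hx : ∀ k, 0 < x k)
    (hyeig : y ᵥ* Bmat V z γ C phat n₀ = specRad (Bmat V z γ C phat n₀) • y)
    (hxeig : Bmat V z γ C phat n₀ *ᵥ x = specRad (Bmat V z γ C phat n₀) • x)
    (c : ℝ) (hc : 0 < c) (w : Fin K → ℝ) (hw : ∀ k, w k = c * (y k * x k)) :
    ∀ p ∈ Pplus C phat,
      ∑ k, w k * φ (SIR V z p k / γ k) ≤ ∑ k, w k * φ (SIR V z pbar k / γ k) := by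
  have : Nonempty (Fin K) := Fin.pos_iff_nonempty.1 (by omega)
  have hC0 : ∀ n k, 0 ≤ C n k := fun n k => (hC n k).elim (·.ge) (·.symm ▸ zero_le_one)
  -- `c • y` is again a left Perron vector, and `w = (c • y) ∘ x`
  have hcy : (c • y) ᵥ* Bmat V z γ C phat n₀ = specRad (Bmat V z γ C phat n₀) • (c • y) := by
    rw [smul_vecMul, hyeig, smul_comm]
  obtain rfl : w = fun k => (c • y) k * x k := funext fun k => by simp [hw, mul_assoc]
  have hw0 : ∀ k, 0 < (c • y) k * x k := fun k => mul_pos (mul_pos hc (hy k)) (hx k)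
  intro p hp
  calc _ ≤ (∑ k, (c • y) k * x k) * φ (⨅ k, SIR V z pbar k / γ k) :=
        sum_mul_le_sum_mul_of_sum_mul_log_le hφmono hginv hglog (fun k => (hw0 k).le)
          (Finset.sum_pos (fun k _ => hw0 k) Finset.univ_nonempty) (SIR_div_pos hV hz hγ hp)
          (hbal.iInf_pos hV hz hγ hphat)
          (hbal.sum_mul_log_SIR_div_le hV hz hγ hC0 hphat hirr hn₀ (fun k => mul_pos hc (hy k))
            hx hcy hxeig hp)
    _ = _ := by
      rw [Finset.sum_mul]
      exact Finset.sum_congr rfl fun k _ => by rw [hbal.SIR_div_eq_iInf hV hz hγ hC0 hphat hirr k]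

theorem stmt16    {K N : ℕ} (hK : 2 ≤ K) (hN : 1 ≤ N)
    (V : Matrix (Fin K) (Fin K) ℝ) (z γ : Fin K → ℝ)
    (C : Matrix (Fin N) (Fin K) ℝ) (phat : Fin N → ℝ)
    (hV : ∀ i j, 0 ≤ V i j) (hVdiag : ∀ i, V i i = 0)
    (hz : ∀ k, 0 < z k) (hγ : ∀ k, 0 < γ k)
    (hC : ∀ n k, C n k = 0 ∨ C n k = 1) (hCcol : ∀ k, ∃ n, C n k = 1)
    (hphat : ∀ n, 0 < phat n)
    (hirr : MatIrred V)
    (φ g : ℝ → ℝ)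
    (hφdiff : ContDiffOn ℝ 1 φ (Set.Ioi 0)) (hφmono : StrictMonoOn φ (Set.Ioi 0))
    (hginv : ∀ x ∈ Set.Ioi (0:ℝ), g (φ x) = x) (hφg : ∀ q ∈ φ '' Set.Ioi 0, φ (g q) = q)
    (hglog : ConvexOn ℝ (φ '' Set.Ioi 0) fun q => Real.log (g q))
    (pbar : Fin K → ℝ) (hbal : MaxMinBalanced V z γ C phat pbar)
    (n₀ : Fin N) (hn₀ : n₀ ∈ activeSet C phat pbar)
    (y x : Fin K → ℝ) (hy : ∀ k, 0 < y k) (hx : ∀ k, 0 < x k)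
    (hyeig : y ᵥ* Bmat V z γ C phat n₀ = specRad (Bmat V z γ C phat n₀) • y)
    (hxeig : Bmat V z γ C phat n₀ *ᵥ x = specRad (Bmat V z γ C phat n₀) • x)
    (c : ℝ) (hc : 0 < c) (w : Fin K → ℝ) (hw : ∀ k, w k = c * (y k * x k)) :
    ∀ p ∈ Pplus C phat,
      ∑ k, w k * φ (SIR V z p k / γ k) ≤ ∑ k, w k * φ (SIR V z pbar k / γ k) :=
  stmt16_general hK V z γ C phat hV hz hγ hC hphat hirr φ g hφmono hginv hglog pbar hbal n₀ hn₀ y x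
    hy hx hyeig hxeig c hc w hw
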